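/- Let k ≥ 2 be an integer, let 0 < α < 1, γ̄ > 0, and x₀ ≥ 0. Define τ(x) = 1 + x(1−α)/(α(k−1)). Then ∫₀^{x₀} [(τ(x) + γ̄(1−α)) / (α γ̄)] · e^{−x/(α γ̄)} · τ(x)^{−k} dx = 1 − e^{−x₀/(α γ̄)} · τ(x₀)^{−(k−1)}. -/
import Mathlib


open Real

/-- **Closed-form CDF of the eavesdropper's SNR under AN beamforming over Rayleigh
fading (equation (25) of the paper).** With `τ(x) = 1 + x(1−α)/(α(k−1))`,
`∫₀^{x₀} [(τ(x) + γe(1−α))/(α γe)] e^{−x/(α γe)} τ(x)^{−k} dx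
  = 1 − e^{−x₀/(α γe)} τ(x₀)^{−(k−1)}`. -/
theorem rayleigh_an_cdf_closed_form
    (k : ℕ) (hk : 2 ≤ k) (α γe x₀ : ℝ) (hα0 : 0 < α) (hα1 : α < 1)
    (hγe : 0 < γe) (hx₀ : 0 ≤ x₀)
    (τ : ℝ → ℝ) (hτ : τ = fun x => 1 + x * (1 - α) / (α * (k - 1))) :
    ∫ x in (0:ℝ)..x₀,
        (τ x + γe * (1 - α)) / (α * γe) * Real.exp (-x / (α * γe)) * (τ x) ^ (-(k : ℝ))
      = 1 - Real.exp (-x₀ / (α * γe)) * (τ x₀) ^ (-((k : ℝ) - 1)) := by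
  have hk1 : (1:ℝ) ≤ (k:ℝ) - 1 := by
    have : (2:ℝ) ≤ (k:ℝ) := by exact_mod_cast hk
    linarith
  have hkne : (k:ℝ) - 1 ≠ 0 := by linarith
  have hc : 0 < α * γe := mul_pos hα0 hγe
  have hb : 0 ≤ (1 - α) / (α * ((k:ℝ) - 1)) := by
    apply div_nonneg (by linarith)
    positivity
  have hτpos : ∀ x ∈ Set.Icc (0:ℝ) x₀, 0 < τ x := by
    intro x hx
    rw [hτ]
    have : 0 ≤ x * (1 - α) / (α * ((k:ℝ) - 1)) := by
      rw [mul_div_assoc]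
      exact mul_nonneg hx.1 hb
    simp only
    linarith
  set F : ℝ → ℝ := fun x => 1 - Real.exp (-x / (α * γe)) * (τ x) ^ (-((k : ℝ) - 1))
    with hF
  have huIcc : Set.uIcc (0:ℝ) x₀ = Set.Icc 0 x₀ := Set.uIcc_of_le hx₀
  have hderiv : ∀ x ∈ Set.uIcc (0:ℝ) x₀,
      HasDerivAt F
        ((τ x + γe * (1 - α)) / (α * γe) * Real.exp (-x / (α * γe)) * (τ x) ^ (-(k : ℝ))) x := by
    intro x hx
    rw [huIcc] at hx
    have hτx : 0 < τ x := hτpos x hx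
    -- derivative of τ
    have hτd : HasDerivAt τ ((1 - α) / (α * ((k:ℝ) - 1))) x := by
      rw [hτ]
      have h1 : HasDerivAt (fun x : ℝ => x * (1 - α) / (α * ((k:ℝ) - 1)))
          (1 * (1 - α) / (α * ((k:ℝ) - 1))) x :=
        (((hasDerivAt_id x).mul_const (1 - α)).div_const _)
      simpa using h1.const_add 1
    have hrpow : HasDerivAt (fun x => (τ x) ^ (-((k:ℝ) - 1)))
        ((1 - α) / (α * ((k:ℝ) - 1)) * (-((k:ℝ) - 1)) * (τ x) ^ (-((k:ℝ) - 1) - 1)) x :=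
      hτd.rpow_const (Or.inl hτx.ne')
    have hexp : HasDerivAt (fun x : ℝ => Real.exp (-x / (α * γe)))
        (Real.exp (-x / (α * γe)) * (-1 / (α * γe))) x := by
      have h1 : HasDerivAt (fun x : ℝ => -x / (α * γe)) (-1 / (α * γe)) x := by
        simpa using ((hasDerivAt_id x).neg.div_const (α * γe))
      exact h1.exp
    have hFat : HasDerivAt F
        (-(Real.exp (-x / (α * γe)) * (-1 / (α * γe)) * (τ x) ^ (-((k:ℝ) - 1))
          + Real.exp (-x / (α * γe)) *
            ((1 - α) / (α * ((k:ℝ) - 1)) * (-((k:ℝ) - 1)) * (τ x) ^ (-((k:ℝ) - 1) - 1)))) x :=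
      (hexp.mul hrpow).const_sub 1
    convert hFat using 1
    -- algebraic identity
    have e1 : (τ x) ^ (-((k:ℝ) - 1) - 1) = (τ x) ^ (-(k:ℝ)) := by
      norm_num
    have e2 : (τ x) ^ (-((k:ℝ) - 1)) = (τ x) ^ (-(k:ℝ)) * τ x := by
      rw [show -((k:ℝ) - 1) = -(k:ℝ) + 1 by ring, Real.rpow_add hτx, Real.rpow_one]
    rw [e1, e2]
    field_simp
    ring
  have hcont : IntervalIntegrable
      (fun x => (τ x + γe * (1 - α)) / (α * γe) * Real.exp (-x / (α * γe)) * (τ x) ^ (-(k : ℝ)))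
      MeasureTheory.volume 0 x₀ := by
    apply ContinuousOn.intervalIntegrable
    rw [huIcc]
    have hτc : Continuous τ := by
      rw [hτ]
      continuity
    apply ContinuousOn.mul
    · apply ContinuousOn.mul
      · exact ((hτc.add continuous_const).div_const _).continuousOn
      · exact (Real.continuous_exp.comp (continuous_neg.div_const _)).continuousOn
    · exact ContinuousOn.rpow_const hτc.continuousOn
        (fun x hx => Or.inl (hτpos x hx).ne')
  have := intervalIntegral.integral_eq_sub_of_hasDerivAt hderiv hcont
  rw [this, hF]
  have hτ0 : τ 0 = 1 := by rw [hτ]; simp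
  simp [hτ0, Real.exp_zero]
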